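/- For every real t > 0, one has (t² − 1)·(2·arctan(t) − π) + 2t > 0. -/

import Mathlib

/-! Since `arctan t⁻¹ = π/2 - arctan t` for `t > 0`, the expression equals
`2 (t - (t² - 1) arctan t⁻¹)`. For `t ≤ 1` the subtracted term is nonpositive, and for `t > 1`
the bound `arctan u < u` gives `(t² - 1) arctan t⁻¹ < (t² - 1) / t < t`. -/

namespace Real

theorem arctan_lt_self {x : ℝ} (hx : 0 < x) : arctan x < x := by
  have h := lt_tan (arctan_pos.mpr hx) (arctan_lt_pi_div_two x)
  rwa [tan_arctan] at h

theorem sq_sub_one_mul_arctan_inv_lt {t : ℝ} (ht : 0 < t) : (t ^ 2 - 1) * arctan t⁻¹ < t := by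
  rcases le_or_gt t 1 with hle | hgt
  · have hcoef : t ^ 2 - 1 ≤ 0 := by nlinarith
    have harctan : 0 ≤ arctan t⁻¹ := arctan_nonneg.mpr (inv_nonneg.mpr ht.le)
    nlinarith [mul_nonpos_of_nonpos_of_nonneg hcoef harctan]
  · have hcoef : 0 < t ^ 2 - 1 := by nlinarith
    calc (t ^ 2 - 1) * arctan t⁻¹ < (t ^ 2 - 1) * t⁻¹ :=
          mul_lt_mul_of_pos_left (arctan_lt_self (inv_pos.mpr ht)) hcoef
      _ = t - t⁻¹ := by field_simp
      _ < t := sub_lt_self t (inv_pos.mpr ht)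

end Real

/-- For every real `t > 0`, `(t² − 1)·(2·arctan t − π) + 2t > 0`. -/
theorem halfCauchy_key_inequality (t : ℝ) (ht : 0 < t) :
    0 < (t ^ 2 - 1) * (2 * Real.arctan t - Real.pi) + 2 * t := by
  have hrewrite : (t ^ 2 - 1) * (2 * Real.arctan t - Real.pi) + 2 * t
      = 2 * (t - (t ^ 2 - 1) * Real.arctan t⁻¹) := by
    rw [Real.arctan_inv_of_pos ht]
    ring
  rw [hrewrite]
  linarith [Real.sq_sub_one_mul_arctan_inv_lt ht]
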